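/- Let (X,T) be a topological dynamical system and let α and β be admissible covers of X with α ≺ β (β refines α). Then the symbolic representation (X_β, σ) is an extension of (X_α, σ): there exists a factor map φ : (X_β, σ) → (X_α, σ). -/

import Mathlib

open Filter Topology Function Set

/-- Iterates of a homeomorphism indexed by `ℕ`. -/
def hpowNat {X : Type*} [TopologicalSpace X] (T : X ≃ₜ X) : ℕ → X ≃ₜ X
  | 0 => Homeomorph.refl X
  | n + 1 => (hpowNat T n).trans T

/-- Iterates of a homeomorphism indexed by `ℤ`. -/
def hpowInt {X : Type*} [TopologicalSpace X] (T : X ≃ₜ X) : ℤ → X ≃ₜ X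
  | Int.ofNat n => hpowNat T n
  | Int.negSucc n => (hpowNat T (n + 1)).symm

/-- The `n`-th iterate (`n : ℤ`) of the homeomorphism `T`, as a map. -/
def hpow {X : Type*} [TopologicalSpace X] (T : X ≃ₜ X) (n : ℤ) : X → X :=
  ⇑(hpowInt T n)

/-- A finite family `A` of subsets of `X` is an admissible cover: the sets are closed,
cover `X`, intersect pairwise only in their boundaries, and the union of their
boundaries has empty interior. -/
def IsAdmissibleCover {X : Type*} [TopologicalSpace X] {ι : Type*} (A : ι → Set X) : Prop :=
  (⋃ i, A i) = Set.univ ∧ (∀ i, IsClosed (A i)) ∧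
  (∀ i j, i ≠ j → A i ∩ A j = frontier (A i) ∩ frontier (A j)) ∧
  interior (⋃ i, frontier (A i)) = ∅

/-- The set of orbit points hitting the boundaries of the cover:
`D_α = ⋃_{n ∈ ℤ} Tⁿ (∂α)`. -/
def coverBoundaryOrbit {X : Type*} [TopologicalSpace X] (T : X ≃ₜ X) {k : ℕ}
    (A : Fin k → Set X) : Set X :=
  ⋃ n : ℤ, hpow T n '' (⋃ i, frontier (A i))

/-- The symbolic representation `X_α` of `(X, α)`: the closure in `{0, …, k-1}^ℤ` of the set
of `α`-names of points of `X \ D_α` (the `α`-name `a` of `x` satisfies `Tⁿ x ∈ A (a n)`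
for all `n`). -/
def SymbolicRep {X : Type*} [TopologicalSpace X] (T : X ≃ₜ X) {k : ℕ}
    (A : Fin k → Set X) : Set (ℤ → Fin k) :=
  closure {a : ℤ → Fin k |
    ∃ x : X, x ∉ coverBoundaryOrbit T A ∧ ∀ n : ℤ, hpow T n x ∈ A (a n)}

/-! Relabel every `β`-symbol `j` by an `α`-symbol `r j` with `B j ⊆ A (r j)`. This is
continuous and commutes with the shift, and it turns the `β`-name of a point avoiding
`D_α ∪ D_β` into its `α`-name. Both `D_α` and `D_β` are meagre, so by Baire's theorem every
finite window of the name of a point outside `D_α` (or `D_β`) is a window of the name of a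
point outside both, where names are unique. Hence relabelling maps `X_β` into `X_α`, and its
image is compact and contains every `α`-name of a point outside `D_α`, so it is all of `X_α`. -/

section Iterates

variable {X : Type*} [TopologicalSpace X] (T : X ≃ₜ X)

theorem hpow_eq_zpow (n : ℤ) : hpow T n = ⇑(T ^ n) := by
  have hnat : ∀ m : ℕ, hpowNat T m = T ^ m := by
    intro m
    induction m with
    | zero => rfl
    | succ m ih => rw [pow_succ', ← ih]; rfl
  cases n with
  | ofNat m => exact congrArg DFunLike.coe ((hnat m).trans (zpow_natCast T m).symm)
  | negSucc m => rw [hpow, hpowInt, zpow_negSucc, ← hnat]; rfl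

theorem hpow_add_one_apply (n : ℤ) (x : X) : hpow T (n + 1) x = hpow T n (T x) := by
  rw [hpow_eq_zpow, hpow_eq_zpow, zpow_add_one, Homeomorph.mul_apply]

theorem mem_coverBoundaryOrbit_iff {k : ℕ} (A : Fin k → Set X) {x : X} :
    x ∈ coverBoundaryOrbit T A ↔ ∃ n : ℤ, hpow T n x ∈ ⋃ i, frontier (A i) := by
  simp only [coverBoundaryOrbit, mem_iUnion, mem_image, hpow_eq_zpow]
  refine ⟨fun ⟨n, z, hz, hzx⟩ => ⟨-n, ?_⟩, fun ⟨n, hn⟩ => ⟨-n, _, hn, ?_⟩⟩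
  · rwa [← hzx, ← Homeomorph.mul_apply, ← zpow_add, neg_add_cancel, zpow_zero,
      Homeomorph.one_apply]
  · rw [← Homeomorph.mul_apply, ← zpow_add, neg_add_cancel, zpow_zero, Homeomorph.one_apply]

theorem apply_notMem_coverBoundaryOrbit {k : ℕ} {A : Fin k → Set X} {x : X}
    (hx : x ∉ coverBoundaryOrbit T A) : T x ∉ coverBoundaryOrbit T A := by
  rw [mem_coverBoundaryOrbit_iff] at hx ⊢
  rintro ⟨n, hn⟩
  exact hx ⟨n + 1, by rwa [hpow_add_one_apply]⟩

end Iterates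

namespace IsAdmissibleCover

variable {X : Type*} [TopologicalSpace X] {ι : Type*} {A : ι → Set X}

theorem exists_mem (hA : IsAdmissibleCover A) (x : X) : ∃ i, x ∈ A i :=
  mem_iUnion.1 (hA.1 ▸ mem_univ x)

theorem eq_of_mem_of_mem (hA : IsAdmissibleCover A) {x : X} (hx : x ∉ ⋃ i, frontier (A i))
    {i j : ι} (hi : x ∈ A i) (hj : x ∈ A j) : i = j := by
  by_contra hij
  have hfr : x ∈ frontier (A i) ∩ frontier (A j) := hA.2.2.1 i j hij ▸ ⟨hi, hj⟩
  exact hx (mem_iUnion.2 ⟨i, hfr.1⟩)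

theorem isNowhereDense_boundary [Finite ι] (hA : IsAdmissibleCover A) :
    IsNowhereDense (⋃ i, frontier (A i)) :=
  (isClosed_iUnion_of_finite fun _ => isClosed_frontier).isNowhereDense_iff.2 hA.2.2.2

end IsAdmissibleCover

section Names

variable {X : Type*} [TopologicalSpace X] (T : X ≃ₜ X) {k l : ℕ}

theorem isMeagre_coverBoundaryOrbit {A : Fin k → Set X} (hA : IsAdmissibleCover A) :
    IsMeagre (coverBoundaryOrbit T A) :=
  isMeagre_iUnion fun n => by
    rw [hpow_eq_zpow]
    exact ((T ^ n).isInducing.isNowhereDense_image hA.isNowhereDense_boundary).isMeagre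

theorem hpow_notMem_iUnion_frontier {A : Fin k → Set X} {x : X}
    (hx : x ∉ coverBoundaryOrbit T A) (n : ℤ) : hpow T n x ∉ ⋃ i, frontier (A i) :=
  fun h => hx ((mem_coverBoundaryOrbit_iff T A).2 ⟨n, h⟩)

def coverNames (A : Fin k → Set X) : Set (ℤ → Fin k) :=
  {a | ∃ x : X, x ∉ coverBoundaryOrbit T A ∧ ∀ n : ℤ, hpow T n x ∈ A (a n)}

theorem symbolicRep_eq_closure (A : Fin k → Set X) :
    SymbolicRep T A = closure (coverNames T A) := rfl

theorem shift_mapsTo_symbolicRep (A : Fin k → Set X) :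
    MapsTo (fun a n => a (n + 1)) (SymbolicRep T A) (SymbolicRep T A) := by
  have hnames : MapsTo (fun (a : ℤ → Fin k) n => a (n + 1)) (coverNames T A) (coverNames T A) :=
    fun a ⟨x, hx, ha⟩ => ⟨T x, apply_notMem_coverBoundaryOrbit T hx, fun n => by
      rw [← hpow_add_one_apply]; exact ha (n + 1)⟩
  exact hnames.closure (by fun_prop)

theorem exists_mem_dense_of_name {A : Fin k → Set X} {G : Set X} (hG : Dense G) {x : X}
    (hx : x ∉ coverBoundaryOrbit T A) {a : ℤ → Fin k} (ha : ∀ n, hpow T n x ∈ A (a n))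
    (I : Finset ℤ) : ∃ y ∈ G, ∀ n ∈ I, hpow T n y ∈ A (a n) := by
  let U : Set X := ⋂ n ∈ I, hpow T n ⁻¹' interior (A (a n))
  have hU : IsOpen U := isOpen_biInter_finset fun n _ =>
    isOpen_interior.preimage (hpow_eq_zpow T n ▸ (T ^ n).continuous)
  have hxU : x ∈ U := mem_iInter₂.2 fun n _ =>
    (mem_interior_iff_notMem_frontier (ha n)).2
      fun h => hpow_notMem_iUnion_frontier T hx n (mem_iUnion.2 ⟨_, h⟩)
  obtain ⟨y, hyG, hyU⟩ := hG.exists_mem_open hU ⟨x, hxU⟩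
  exact ⟨y, hyG, fun n hn => interior_subset (mem_iInter₂.1 hyU n hn)⟩

theorem exists_coverNames_relabel {A : Fin k → Set X} {B : Fin l → Set X}
    (hB : IsAdmissibleCover B) {r : Fin l → Fin k} (hr : ∀ j, B j ⊆ A (r j)) {y : X}
    (hyA : y ∉ coverBoundaryOrbit T A) (hyB : y ∉ coverBoundaryOrbit T B) :
    ∃ b ∈ coverNames T B, r ∘ b ∈ coverNames T A ∧ ∀ n, hpow T n y ∈ B (b n) := by
  choose b hb using fun n => hB.exists_mem (hpow T n y)
  exact ⟨b, ⟨y, hyB, hb⟩, ⟨y, hyA, fun n => hr _ (hb n)⟩, hb⟩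

end Names

theorem mem_closure_of_forall_finset_eqOn {ι α : Type*} [TopologicalSpace α]
    {a : ι → α} {S : Set (ι → α)} (h : ∀ I : Finset ι, ∃ s ∈ S, ∀ n ∈ I, s n = a n) :
    a ∈ closure S := by
  refine mem_closure_iff.2 fun o ho hao => ?_
  obtain ⟨I, u, hu, hsub⟩ := isOpen_pi_iff.1 ho a hao
  obtain ⟨s, hsS, hs⟩ := h I
  exact ⟨s, hsub fun n hn => (hs n hn) ▸ (hu n hn).2, hsS⟩

section Relabel

variable {X : Type*} [TopologicalSpace X] [BaireSpace X] (T : X ≃ₜ X) {k l : ℕ}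
  {A : Fin k → Set X} {B : Fin l → Set X} {r : Fin l → Fin k}

theorem dense_compl_union_coverBoundaryOrbit (hA : IsAdmissibleCover A)
    (hB : IsAdmissibleCover B) : Dense (coverBoundaryOrbit T A ∪ coverBoundaryOrbit T B)ᶜ :=
  dense_of_mem_residual ((isMeagre_coverBoundaryOrbit T hA).union
    (isMeagre_coverBoundaryOrbit T hB))

theorem relabel_mapsTo_symbolicRep (hA : IsAdmissibleCover A) (hB : IsAdmissibleCover B)
    (hr : ∀ j, B j ⊆ A (r j)) :
    MapsTo (r ∘ ·) (SymbolicRep T B) (SymbolicRep T A) := by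
  rw [symbolicRep_eq_closure, symbolicRep_eq_closure, ← closure_closure (s := coverNames T A)]
  refine MapsTo.closure ?_ (by fun_prop)
  rintro b ⟨x, hx, hb⟩
  refine mem_closure_of_forall_finset_eqOn fun I => ?_
  obtain ⟨y, hyG, hyI⟩ :=
    exists_mem_dense_of_name T (dense_compl_union_coverBoundaryOrbit T hA hB) hx hb I
  rw [mem_compl_iff, mem_union, not_or] at hyG
  obtain ⟨b', -, hb'A, hb'⟩ := exists_coverNames_relabel T hB hr hyG.1 hyG.2
  exact ⟨r ∘ b', hb'A, fun n hn =>
    congrArg r (hB.eq_of_mem_of_mem (hpow_notMem_iUnion_frontier T hyG.2 n) (hb' n) (hyI n hn))⟩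

theorem symbolicRep_subset_image_relabel (hA : IsAdmissibleCover A) (hB : IsAdmissibleCover B)
    (hr : ∀ j, B j ⊆ A (r j)) :
    SymbolicRep T A ⊆ (r ∘ ·) '' SymbolicRep T B := by
  have hclosed : IsClosed ((r ∘ ·) '' SymbolicRep T B) :=
    (isClosed_closure.isCompact.image (by fun_prop)).isClosed
  refine closure_minimal ?_ hclosed
  rintro a ⟨x, hx, ha⟩
  rw [← hclosed.closure_eq]
  refine mem_closure_of_forall_finset_eqOn fun I => ?_
  obtain ⟨y, hyG, hyI⟩ :=
    exists_mem_dense_of_name T (dense_compl_union_coverBoundaryOrbit T hA hB) hx ha I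
  rw [mem_compl_iff, mem_union, not_or] at hyG
  obtain ⟨b, hbB, -, hb⟩ := exists_coverNames_relabel T hB hr hyG.1 hyG.2
  exact ⟨r ∘ b, mem_image_of_mem _ (subset_closure hbB), fun n hn =>
    hA.eq_of_mem_of_mem (hpow_notMem_iUnion_frontier T hyG.1 n) (hr _ (hb n)) (hyI n hn)⟩

end Relabel

/-- **Lemma A.8.** Let `(X,T)` be a t.d.s. and `α ≺ β` admissible covers of `X` (`β`
refines `α`). Then the symbolic representation `(X_β, σ)` is an extension of `(X_α, σ)`:
the shift restricts to both, and there is a factor map `φ : (X_β, σ) → (X_α, σ)`. -/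
theorem symbolicRep_factor_of_refinement
    {X : Type*} [MetricSpace X] [CompactSpace X] (T : X ≃ₜ X) {k l : ℕ}
    (A : Fin k → Set X) (B : Fin l → Set X)
    (hA : IsAdmissibleCover A) (hB : IsAdmissibleCover B)
    (href : ∀ j, ∃ i, B j ⊆ A i) :
    ∃ (σβ : SymbolicRep T B → SymbolicRep T B) (σα : SymbolicRep T A → SymbolicRep T A),
      (∀ b : SymbolicRep T B, (σβ b : ℤ → Fin l) = fun n => (b : ℤ → Fin l) (n + 1)) ∧
      (∀ a : SymbolicRep T A, (σα a : ℤ → Fin k) = fun n => (a : ℤ → Fin k) (n + 1)) ∧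
      ∃ φ : SymbolicRep T B → SymbolicRep T A,
        Continuous φ ∧ Surjective φ ∧ ∀ b, φ (σβ b) = σα (φ b) := by
  choose r hr using href
  have hφ := relabel_mapsTo_symbolicRep T hA hB hr
  exact ⟨(shift_mapsTo_symbolicRep T B).restrict _ _ _,
    (shift_mapsTo_symbolicRep T A).restrict _ _ _, fun _ => rfl, fun _ => rfl,
    hφ.restrict _ _ _, Continuous.restrict hφ (by fun_prop),
    hφ.restrict_surjective_iff.2 (symbolicRep_subset_image_relabel T hA hB hr), fun _ => rfl⟩
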